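/- Let W ⊂ GL(𝔱) be a finite group such that ℂ[𝔱*] is a free ℂ[𝔱*]^W-module of rank |W|, and let ν ∈ 𝔱* have trivial W-stabilizer. Then the kernel of the evaluation map Ev_ν : ℂ[𝔱*] → ℂ^W, Ev_ν(p) = (p(wν))_{w∈W}, equals the ideal generated by the W-invariant polynomials vanishing at ν. -/

import Mathlib

/-- Substitution action of a matrix on polynomials: `Xᵢ ↦ ∑ⱼ Mᵢⱼ Xⱼ`. -/
noncomputable def polyAct (n : ℕ) (M : Matrix (Fin n) (Fin n) ℂ) :
    MvPolynomial (Fin n) ℂ →ₐ[ℂ] MvPolynomial (Fin n) ℂ :=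
  MvPolynomial.aeval fun i => ∑ j, MvPolynomial.C (M i j) * MvPolynomial.X j

/-- The subalgebra of `W`-invariant polynomials. -/
noncomputable def invariantPolys (n : ℕ)
    (W : Subgroup (Matrix.GeneralLinearGroup (Fin n) ℂ)) :
    Subalgebra ℂ (MvPolynomial (Fin n) ℂ) :=
  ⨅ w : W, AlgHom.equalizer
    (polyAct n ((w : Matrix.GeneralLinearGroup (Fin n) ℂ) : Matrix (Fin n) (Fin n) ℂ))
    (AlgHom.id ℂ (MvPolynomial (Fin n) ℂ))

lemma eval_polyAct (n : ℕ) (M : Matrix (Fin n) (Fin n) ℂ) (ν : Fin n → ℂ)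
    (p : MvPolynomial (Fin n) ℂ) :
    MvPolynomial.eval ν (polyAct n M p) = MvPolynomial.eval (M.mulVec ν) p := by
  induction p using MvPolynomial.induction_on with
  | C a => simp [polyAct]
  | add p q hp hq => simp [map_add, hp, hq]
  | mul_X p i hp =>
      simp only [map_mul, hp, polyAct, MvPolynomial.aeval_X, map_sum,
        MvPolynomial.eval_mul, MvPolynomial.eval_sum, MvPolynomial.eval_C,
        MvPolynomial.eval_X, Matrix.mulVec, dotProduct]
      exact congrArg (· * ∑ x, M i x * ν x) hp

lemma mem_invariantPolys_iff (n : ℕ) (W : Subgroup (Matrix.GeneralLinearGroup (Fin n) ℂ))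
    (p : MvPolynomial (Fin n) ℂ) :
    p ∈ invariantPolys n W ↔ ∀ w : W,
      polyAct n ((w : Matrix.GeneralLinearGroup (Fin n) ℂ) : Matrix (Fin n) (Fin n) ℂ) p = p := by
  simp [invariantPolys, Algebra.mem_iInf, AlgHom.mem_equalizer]

/-- Lagrange-type indicator polynomials. -/
lemma exists_indicator {n : ℕ} {ι : Type*} [Fintype ι] [DecidableEq ι]
    (v : ι → Fin n → ℂ) (hv : Function.Injective v) (w : ι) :
    ∃ p : MvPolynomial (Fin n) ℂ, MvPolynomial.eval (v w) p = 1 ∧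
      ∀ u, u ≠ w → MvPolynomial.eval (v u) p = 0 := by
  have hcoord : ∀ u : ι, u ≠ w → ∃ i, v w i ≠ v u i := by
    intro u hu
    by_contra h
    push_neg at h
    exact hu (hv (funext h)).symm
  classical
  choose idx hidx using hcoord
  set e := fun (u : ι) (hu : u ∈ Finset.univ.erase w) =>
    MvPolynomial.C (v w (idx u (Finset.mem_erase.mp hu).1) -
        v u (idx u (Finset.mem_erase.mp hu).1))⁻¹ *
      (MvPolynomial.X (idx u (Finset.mem_erase.mp hu).1) -
        MvPolynomial.C (v u (idx u (Finset.mem_erase.mp hu).1))) with he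
  refine ⟨∏ u ∈ (Finset.univ.erase w).attach, e u.1 u.2, ?_, ?_⟩
  · rw [map_prod]
    refine Finset.prod_eq_one fun u _ => ?_
    have h := hidx u.1 (Finset.mem_erase.mp u.2).1
    field_simp [he]
    simp only [he, map_mul, map_sub, MvPolynomial.eval_C, MvPolynomial.eval_X]
    exact inv_mul_cancel₀ (sub_ne_zero.mpr h)
  · intro u hu
    rw [map_prod]
    refine Finset.prod_eq_zero (i := (⟨u, Finset.mem_erase.mpr ⟨hu, Finset.mem_univ u⟩⟩ :
      {x // x ∈ Finset.univ.erase w})) (Finset.mem_attach _ _) ?_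
    simp [he]

/-- If `ℂ[𝔱*]` is a free module of rank `|W|` over the `W`-invariants and `ν` has trivial
`W`-stabilizer, then the kernel of the evaluation map `Ev_ν : p ↦ (p(wν))_{w∈W}` equals
the ideal generated by the `W`-invariant polynomials vanishing at `ν`. -/
theorem ker_ev_eq_ideal (n : ℕ) (W : Subgroup (Matrix.GeneralLinearGroup (Fin n) ℂ))
    [Finite W] (ν : Fin n → ℂ)
    (hν : ∀ w : W,
      ((w : Matrix.GeneralLinearGroup (Fin n) ℂ) : Matrix (Fin n) (Fin n) ℂ).mulVec ν = ν →
      w = 1)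
    (hfree : Nonempty
      (Module.Basis (Fin (Nat.card W)) (invariantPolys n W) (MvPolynomial (Fin n) ℂ))) :
    ∀ f : MvPolynomial (Fin n) ℂ,
      (∀ w : W,
          MvPolynomial.eval
            (((w : Matrix.GeneralLinearGroup (Fin n) ℂ) :
              Matrix (Fin n) (Fin n) ℂ).mulVec ν) f = 0) ↔
        f ∈ Ideal.span {f : MvPolynomial (Fin n) ℂ |
          f ∈ invariantPolys n W ∧ MvPolynomial.eval ν f = 0} := by
  classical
  have : Fintype W := Fintype.ofFinite W
  obtain ⟨b⟩ := hfree
  set v : W → Fin n → ℂ := fun w =>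
    ((w : Matrix.GeneralLinearGroup (Fin n) ℂ) : Matrix (Fin n) (Fin n) ℂ).mulVec ν with hv
  set I : Ideal (MvPolynomial (Fin n) ℂ) := Ideal.span {f : MvPolynomial (Fin n) ℂ |
    f ∈ invariantPolys n W ∧ MvPolynomial.eval ν f = 0} with hI
  have haeval : ∀ (x : Fin n → ℂ) (p : MvPolynomial (Fin n) ℂ),
      MvPolynomial.aeval x p = MvPolynomial.eval x p := by
    intro x p
    rw [← MvPolynomial.coe_aeval_eq_eval]
    rfl
  -- the evaluation algebra homomorphism
  set Ev : MvPolynomial (Fin n) ℂ →ₐ[ℂ] (W → ℂ) :=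
    Pi.algHom ℂ _ (fun w => MvPolynomial.aeval (v w)) with hEv
  have hEvApp : ∀ p w, Ev p w = MvPolynomial.eval (v w) p := by
    intro p w; simpa [hEv] using haeval (v w) p
  -- easy direction: I is contained in the kernel of Ev
  have hIker : ∀ f ∈ I, Ev f = 0 := by
    intro f hf
    have : I ≤ RingHom.ker (Ev : MvPolynomial (Fin n) ℂ →+* (W → ℂ)) := by
      rw [hI, Ideal.span_le]
      rintro p ⟨hpinv, hpν⟩
      have : ∀ w : W, MvPolynomial.eval (v w) p = 0 := by
        intro w
        have h1 := (mem_invariantPolys_iff n W p).mp hpinv w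
        calc MvPolynomial.eval (v w) p
            = MvPolynomial.eval ν (polyAct n _ p) := (eval_polyAct n _ ν p).symm
          _ = MvPolynomial.eval ν p := by rw [h1]
          _ = 0 := hpν
      exact funext fun w => (hEvApp p w).trans (this w)
    exact this hf
  -- the induced map on the quotient
  set Evbar : (MvPolynomial (Fin n) ℂ ⧸ I) →ₐ[ℂ] (W → ℂ) :=
    Ideal.Quotient.liftₐ I Ev hIker with hEvbar
  have hEvbar_mk : ∀ p, Evbar (Ideal.Quotient.mk I p) = Ev p := by
    intro p
    rw [hEvbar, Ideal.Quotient.liftₐ_apply]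
    rfl
  -- the orbit map is injective
  have hvinj : Function.Injective v := by
    intro w₁ w₂ hvw
    rw [hv] at hvw
    simp only at hvw
    have e2 : ((((w₂⁻¹ : W) : Matrix.GeneralLinearGroup (Fin n) ℂ)) :
        Matrix (Fin n) (Fin n) ℂ) * ((((w₂ : W) : Matrix.GeneralLinearGroup (Fin n) ℂ)) :
        Matrix (Fin n) (Fin n) ℂ) = 1 := by
      have h1 : ((w₂⁻¹ : W) : Matrix.GeneralLinearGroup (Fin n) ℂ) * (w₂ : Matrix.GeneralLinearGroup (Fin n) ℂ) = 1 := by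
        rw [← Subgroup.coe_mul]; simp
      calc ((((w₂⁻¹ : W) : Matrix.GeneralLinearGroup (Fin n) ℂ)) : Matrix (Fin n) (Fin n) ℂ) *
            ((((w₂ : W) : Matrix.GeneralLinearGroup (Fin n) ℂ)) : Matrix (Fin n) (Fin n) ℂ)
          = (((w₂⁻¹ : W) : Matrix.GeneralLinearGroup (Fin n) ℂ) *
              ((w₂ : W) : Matrix.GeneralLinearGroup (Fin n) ℂ) :
              Matrix.GeneralLinearGroup (Fin n) ℂ) := (Units.val_mul _ _).symm
        _ = 1 := by rw [h1]; rfl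
    have e1 : ((((w₂⁻¹ * w₁ : W) : Matrix.GeneralLinearGroup (Fin n) ℂ)) :
        Matrix (Fin n) (Fin n) ℂ) =
        ((((w₂⁻¹ : W) : Matrix.GeneralLinearGroup (Fin n) ℂ)) : Matrix (Fin n) (Fin n) ℂ) *
        ((((w₁ : W) : Matrix.GeneralLinearGroup (Fin n) ℂ)) : Matrix (Fin n) (Fin n) ℂ) := by
      rw [Subgroup.coe_mul, Units.val_mul]
    have hfix : ((((w₂⁻¹ * w₁ : W) : Matrix.GeneralLinearGroup (Fin n) ℂ)) :
        Matrix (Fin n) (Fin n) ℂ).mulVec ν = ν := by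
      rw [e1, ← Matrix.mulVec_mulVec, hvw, Matrix.mulVec_mulVec, e2, Matrix.one_mulVec]
    have h2 : w₂⁻¹ * w₁ = 1 := hν _ hfix
    exact (inv_mul_eq_one.mp h2).symm
  -- Ev is surjective
  have hEvSurj : Function.Surjective Ev := by
    intro c
    choose ind hind1 hind0 using fun w => exists_indicator v hvinj w
    refine ⟨∑ w : W, MvPolynomial.C (c w) * ind w, ?_⟩
    funext u
    rw [hEvApp]
    rw [MvPolynomial.eval_sum]
    rw [Finset.sum_eq_single u]
    · simp [hind1 u]
    · intro w _ hw
      simp [hind0 w u (Ne.symm hw)]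
    · simp
  -- surjection from ℂ^N onto the quotient
  set N := Nat.card W with hN
  set g : (Fin N → ℂ) →ₗ[ℂ] (MvPolynomial (Fin n) ℂ ⧸ I) :=
    Fintype.linearCombination ℂ (fun i => Ideal.Quotient.mk I (b i)) with hg
  have hgSurj : Function.Surjective g := by
    intro x
    obtain ⟨a, rfl⟩ := Ideal.Quotient.mk_surjective (I := I) x
    refine ⟨fun i => MvPolynomial.eval ν ((b.repr a i : MvPolynomial (Fin n) ℂ)), ?_⟩
    rw [hg, Fintype.linearCombination_apply]
    have hrepr : a = ∑ i, ((b.repr a i : MvPolynomial (Fin n) ℂ)) * b i := by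
      conv_lhs => rw [← b.sum_repr a]
      exact Finset.sum_congr rfl fun i _ => rfl
    conv_rhs => rw [hrepr]
    rw [map_sum]
    refine Finset.sum_congr rfl fun i _ => ?_
    set r : MvPolynomial (Fin n) ℂ := (b.repr a i : MvPolynomial (Fin n) ℂ) with hr
    set c : ℂ := MvPolynomial.eval ν r with hc
    have hmem : r - MvPolynomial.C c ∈ invariantPolys n W := by
      refine sub_mem (b.repr a i).2 ?_
      exact (invariantPolys n W).algebraMap_mem c
    have hzero : MvPolynomial.eval ν (r - MvPolynomial.C c) = 0 := by
      simp [hc]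
    have hIn : (r - MvPolynomial.C c) * b i ∈ I := by
      rw [hI]
      exact Ideal.mul_mem_right _ _ (Ideal.subset_span ⟨hmem, hzero⟩)
    have : Ideal.Quotient.mk I (r * b i) = Ideal.Quotient.mk I (MvPolynomial.C c * b i) := by
      rw [Ideal.Quotient.mk_eq_mk_iff_sub_mem]
      have : r * b i - MvPolynomial.C c * b i = (r - MvPolynomial.C c) * b i := by ring
      rw [this]; exact hIn
    rw [this, map_mul,
      show Ideal.Quotient.mk I (MvPolynomial.C c) = algebraMap ℂ _ c from rfl,
      ← Algebra.smul_def]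
  -- the composite map is injective, hence Evbar is injective
  have hEvbarSurj : Function.Surjective Evbar := by
    intro c
    obtain ⟨p, hp⟩ := hEvSurj c
    exact ⟨Ideal.Quotient.mk I p, by rw [hEvbar_mk, hp]⟩
  set h : (Fin N → ℂ) →ₗ[ℂ] (W → ℂ) := Evbar.toLinearMap ∘ₗ g with hh
  have hhSurj : Function.Surjective h := by
    intro c
    obtain ⟨x, hx⟩ := hEvbarSurj c
    obtain ⟨y, hy⟩ := hgSurj x
    exact ⟨y, by simp [hh, hy, hx]⟩
  have ecard : Fintype.card W = N := by rw [hN, Nat.card_eq_fintype_card]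
  set eW : W ≃ Fin N := Fintype.equivFinOfCardEq ecard with heW
  set eL : (W → ℂ) ≃ₗ[ℂ] (Fin N → ℂ) := LinearEquiv.funCongrLeft ℂ ℂ eW.symm with heL
  have hcompSurj : Function.Surjective ((eL : (W → ℂ) →ₗ[ℂ] (Fin N → ℂ)) ∘ₗ h) :=
    eL.surjective.comp hhSurj
  have hcompInj : Function.Injective ((eL : (W → ℂ) →ₗ[ℂ] (Fin N → ℂ)) ∘ₗ h) :=
    LinearMap.injective_iff_surjective.mpr hcompSurj
  have hhInj : Function.Injective h := fun x y hxy =>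
    hcompInj (by simp [LinearMap.comp_apply, hxy])
  have hEvbarInj : ∀ x, Evbar x = 0 → x = 0 := by
    intro x hx
    obtain ⟨y, rfl⟩ := hgSurj x
    have : h y = 0 := by simp [hh, hx]
    have hy0 : y = 0 := hhInj (by rw [this]; simp [hh])
    rw [hy0, map_zero]
  -- conclude
  intro f
  constructor
  · intro hf
    have hEvf : Ev f = 0 := funext fun w => (hEvApp f w).trans (hf w)
    have : Evbar (Ideal.Quotient.mk I f) = 0 := by rw [hEvbar_mk, hEvf]
    have := hEvbarInj _ this
    rwa [Ideal.Quotient.eq_zero_iff_mem] at this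
  · intro hf w
    have := hIker f hf
    have := congrFun this w
    rwa [hEvApp] at this
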